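/- arXiv:2309.17419 — 4 statements merged into one kernel-verified Lean document; each statement's English description precedes it below -/
import Mathlib

section
/- In the split graph G of the geodetic-set construction, the set I = H ∪ {e*} is contained in every geodetic set of G. -/
namespace GeoConstr

/-! ## The geodetic-set construction

Given a hypergraph `ℋ` with vertex set `{v_1, …, v_n}` (encoded as `Fin n`) and edge set
`E_1, …, E_m` (encoded as `E : Fin m → Set (Fin n)`), with `n, m ≥ 1` and no vertex of `ℋ`
belonging to every edge, we build the split graph `G` of the reduction from Trans-Enum to
MinGeodetic on split graphs.  Vertex `v_i` of the paper is `GVert.v ⟨i-1⟩`, `e_j` is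
`GVert.e ⟨j-1⟩`, `u_j` is `GVert.u ⟨j-1⟩`, and `e*`, `u*` are `GVert.estar`, `GVert.ustar`. -/

inductive GVert (n m : ℕ) : Type
  | v : Fin n → GVert n m
  | e : Fin m → GVert n m
  | u : Fin m → GVert n m
  | estar : GVert n m
  | ustar : GVert n m

variable {n m : ℕ}

/-- The base (one-sided) adjacency relation of the construction; the graph is obtained by
symmetrizing it. -/
def baseRel (E : Fin m → Set (Fin n)) : GVert n m → GVert n m → Prop
  | .v _, .v _ => True            -- U ∪ V is a clique
  | .u _, .u _ => True
  | .v _, .u _ => True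
  | .v i, .e j => i ∉ E j         -- non-incidence between V and H
  | .u j, .e j' => j = j'         -- u_j is adjacent to e_j and to no other vertex of H
  | .estar, .v _ => True          -- e* is adjacent to every vertex of V
  | .ustar, .ustar => False
  | .ustar, _ => True             -- u* is adjacent to every other vertex of G
  | _, _ => False

/-- The split graph `G` of the geodetic-set construction. -/
def G (E : Fin m → Set (Fin n)) : SimpleGraph (GVert n m) :=
  SimpleGraph.fromRel (baseRel E)

/-- `z` lies on some shortest `x`–`y` path in `G`. -/
def LiesOnShortestPath {α : Type*} (G : SimpleGraph α) (x y z : α) : Prop :=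
  ∃ pth : G.Walk x y, pth.IsPath ∧ pth.length = G.dist x y ∧ z ∈ pth.support

/-- `S` is a geodetic set of `G`: every vertex is covered by some pair of vertices of `S`. -/
def IsGeodeticSet {α : Type*} (G : SimpleGraph α) (S : Set α) : Prop :=
  ∀ z : α, ∃ x ∈ S, ∃ y ∈ S, LiesOnShortestPath G x y z

/-- `S` is an inclusion-wise minimal geodetic set of `G`. -/
def IsMinimalGeodeticSet {α : Type*} (G : SimpleGraph α) (S : Set α) : Prop :=
  IsGeodeticSet G S ∧ ∀ S' : Set α, S' ⊂ S → ¬ IsGeodeticSet G S'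

/-- `T` is a transversal of the hypergraph with edges `E j`. -/
def IsTransversal (E : Fin m → Set (Fin n)) (T : Set (Fin n)) : Prop :=
  ∀ j : Fin m, (T ∩ E j).Nonempty

/-- `T` is an inclusion-wise minimal transversal of the hypergraph with edges `E j`. -/
def IsMinimalTransversal (E : Fin m → Set (Fin n)) (T : Set (Fin n)) : Prop :=
  IsTransversal E T ∧ ∀ T' : Set (Fin n), T' ⊂ T → ¬ IsTransversal E T'

/-- The independent set `I = H ∪ {e*}` of the split graph `G`. -/
def Iset : Set (GVert n m) := Set.range (GVert.e : Fin m → GVert n m) ∪ {GVert.estar}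

/-- The clique `K = U ∪ V ∪ {u*}` of the split graph `G`. -/
def Kset : Set (GVert n m) :=
  Set.range (GVert.u : Fin m → GVert n m) ∪ Set.range (GVert.v : Fin n → GVert n m) ∪
    {GVert.ustar}

noncomputable instance : DecidableEq (GVert n m) := Classical.decEq _

/-- Vertices of `Iset` are simplicial: their neighborhoods are cliques. -/
lemma Iset_simplicial (E : Fin m → Set (Fin n)) {z a b : GVert n m} (hz : z ∈ Iset)
    (ha : (G E).Adj z a) (hb : (G E).Adj z b) (hab : a ≠ b) : (G E).Adj a b := by
  rcases hz with ⟨j, rfl⟩ | hz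
  · cases a <;> cases b <;>
      simp_all [G, SimpleGraph.fromRel_adj, baseRel]
  · simp only [Set.mem_singleton_iff] at hz
    subst hz
    cases a <;> cases b <;>
      simp_all [G, SimpleGraph.fromRel_adj, baseRel]

/-- In the split graph `G` of the geodetic-set construction, the set `I = H ∪ {e*}` is
contained in every geodetic set of `G`. -/
theorem Iset_subset_geodetic
    (E : Fin m → Set (Fin n)) (hn : 1 ≤ n) (hm : 1 ≤ m)
    (hE : ∀ i : Fin n, ∃ j : Fin m, i ∉ E j)
    (S : Set (GVert n m)) (hS : IsGeodeticSet (G E) S) :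
    Iset ⊆ S := by
  intro z hz
  obtain ⟨x, hx, y, hy, pth, hpath, hlen, hsupp⟩ := hS z
  by_cases hzx : z = x
  · exact hzx ▸ hx
  by_cases hzy : z = y
  · exact hzy ▸ hy
  exfalso
  -- split the path at z
  set p := pth.takeUntil z hsupp with hp_def
  set q := pth.dropUntil z hsupp with hq_def
  have hspec : p.append q = pth := pth.take_spec hsupp
  have hp : p.IsPath := hpath.takeUntil hsupp
  have hq : q.IsPath := hpath.dropUntil hsupp
  -- decompose p (from the z end) and q
  have hxz : x ≠ z := fun h => hzx h.symm
  obtain ⟨a, ha, p₂, hpr⟩ : ∃ a, ∃ ha : (G E).Adj z a, ∃ p₂ : (G E).Walk a x,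
      p.reverse = SimpleGraph.Walk.cons ha p₂ :=
    SimpleGraph.Walk.exists_eq_cons_of_ne (fun h => hxz h.symm) p.reverse
  obtain ⟨b, hb, q₂, hqr⟩ : ∃ b, ∃ hb : (G E).Adj z b, ∃ q₂ : (G E).Walk b y,
      q = SimpleGraph.Walk.cons hb q₂ :=
    SimpleGraph.Walk.exists_eq_cons_of_ne hzy q
  -- a ≠ b since pth is a path
  have hmema : a ∈ p.support := by
    have : a ∈ p.reverse.support := by
      rw [hpr, SimpleGraph.Walk.support_cons]
      exact List.mem_cons_of_mem _ p₂.start_mem_support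
    simpa using this
  have hmemb : b ∈ q.support.tail := by
    rw [hqr, SimpleGraph.Walk.support_cons]
    exact q₂.start_mem_support
  have hnodup : (p.support ++ q.support.tail).Nodup := by
    have := hpath.support_nodup
    rwa [← hspec, SimpleGraph.Walk.support_append] at this
  have hab : a ≠ b := by
    intro h
    exact (List.disjoint_of_nodup_append hnodup) hmema (h ▸ hmemb)
  -- build a shorter walk
  have hadj : (G E).Adj a b := Iset_simplicial E hz ha hb hab
  let w : (G E).Walk x y := p₂.reverse.append (SimpleGraph.Walk.cons hadj q₂)
  have hwlen : w.length + 1 = pth.length := by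
    have h1 : p.length = p₂.length + 1 := by
      have : p.reverse.length = p₂.length + 1 := by rw [hpr]; simp
      simpa using this
    have h2 : q.length = q₂.length + 1 := by rw [hqr]; simp
    have h3 : pth.length = p.length + q.length := by
      rw [← hspec, SimpleGraph.Walk.length_append]
    simp only [w, SimpleGraph.Walk.length_append, SimpleGraph.Walk.length_reverse,
      SimpleGraph.Walk.length_cons]
    omega
  have hdle : (G E).dist x y ≤ w.length := SimpleGraph.dist_le w
  omega

end GeoConstr
end

section
/- In the split graph G of the geodetic-set construction, a vertex of G is covered by some pair of vertices of I = H ∪ {e*} if and only if it does not belong to U; that is, exactly the vertices of U are not covered by the pairs of vertices of I. -/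
namespace GeoConstr

variable {n m : ℕ}

variable {E : Fin m → Set (Fin n)}

lemma adj_iff (a b : GVert n m) :
    (G E).Adj a b ↔ a ≠ b ∧ (baseRel E a b ∨ baseRel E b a) :=
  SimpleGraph.fromRel_adj _ _ _

lemma adj_ustar (x : GVert n m) (hx : x ≠ .ustar) : (G E).Adj GVert.ustar x := by
  rw [adj_iff]
  refine ⟨fun h => hx h.symm, Or.inl ?_⟩
  cases x <;> simp_all [baseRel]

lemma mem_Iset_iff (x : GVert n m) :
    x ∈ (Iset : Set (GVert n m)) ↔ (∃ j, x = GVert.e j) ∨ x = GVert.estar := by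
  simp [Iset, eq_comm, or_comm]

lemma Iset_ne_ustar {x : GVert n m} (hx : x ∈ (Iset : Set (GVert n m))) :
    x ≠ GVert.ustar := by
  rcases (mem_Iset_iff x).1 hx with ⟨j, rfl⟩ | rfl <;> simp

lemma not_adj_Iset {x y : GVert n m} (hx : x ∈ (Iset : Set (GVert n m)))
    (hy : y ∈ (Iset : Set (GVert n m))) : ¬ (G E).Adj x y := by
  rcases (mem_Iset_iff x).1 hx with ⟨j, rfl⟩ | rfl <;>
    rcases (mem_Iset_iff y).1 hy with ⟨j', rfl⟩ | rfl <;>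
      simp [adj_iff, baseRel]

lemma dist_Iset {x y : GVert n m} (hx : x ∈ (Iset : Set (GVert n m)))
    (hy : y ∈ (Iset : Set (GVert n m))) (hxy : x ≠ y) : (G E).dist x y = 2 := by
  have hxu : (G E).Adj x GVert.ustar := ((adj_ustar x (Iset_ne_ustar hx))).symm
  have huy : (G E).Adj GVert.ustar y := adj_ustar y (Iset_ne_ustar hy)
  have hle : (G E).dist x y ≤ 2 := by
    have := SimpleGraph.dist_le (SimpleGraph.Walk.cons hxu (SimpleGraph.Walk.cons huy .nil))
    simpa using this
  have hpos : 0 < (G E).dist x y :=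
    SimpleGraph.Reachable.pos_dist_of_ne ⟨(SimpleGraph.Walk.cons hxu (SimpleGraph.Walk.cons huy .nil))⟩ hxy
  have hne1 : (G E).dist x y ≠ 1 := fun h =>
    not_adj_Iset hx hy (SimpleGraph.dist_eq_one_iff_adj.mp h)
  omega

lemma mid_of_length_two {α : Type*} (H : SimpleGraph α) {x y z : α} (p : H.Walk x y)
    (hl : p.length = 2) (hz : z ∈ p.support) :
    z = x ∨ z = y ∨ (H.Adj x z ∧ H.Adj z y) := by
  cases p with
  | nil => simp at hl
  | cons h q =>
    cases q with
    | nil => simp at hl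
    | @cons b c _ h' q' =>
      cases q' with
      | nil =>
        simp only [SimpleGraph.Walk.support_cons, SimpleGraph.Walk.support_nil,
          List.mem_cons, List.mem_singleton] at hz
        rcases hz with rfl | rfl | rfl | h0
        · exact Or.inl rfl
        · exact Or.inr (Or.inr ⟨h, h'⟩)
        · exact Or.inr (Or.inl rfl)
        · simp at h0
      | cons h'' q'' => simp at hl
lemma Iset_adj_u {x : GVert n m} {j : Fin m} (hx : x ∈ (Iset : Set (GVert n m)))
    (h : (G E).Adj x (GVert.u j)) : x = GVert.e j := by
  rcases (mem_Iset_iff x).1 hx with ⟨j', rfl⟩ | rfl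
  · rw [adj_iff] at h
    rcases h.2 with h' | h' <;> simp [baseRel] at h'
    exact congrArg GVert.e h'.symm
  · rw [adj_iff] at h
    rcases h.2 with h' | h' <;> simp [baseRel] at h'

lemma e_mem_Iset (j : Fin m) : GVert.e j ∈ (Iset : Set (GVert n m)) :=
  (mem_Iset_iff _).2 (Or.inl ⟨j, rfl⟩)

lemma estar_mem_Iset : GVert.estar ∈ (Iset : Set (GVert n m)) :=
  (mem_Iset_iff _).2 (Or.inr rfl)

lemma covered_of {x y w z : GVert n m} (hx : x ∈ (Iset : Set (GVert n m)))
    (hy : y ∈ (Iset : Set (GVert n m))) (hxy : x ≠ y)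
    (hxw : (G E).Adj x w) (hwy : (G E).Adj w y)
    (hz : z = x ∨ z = w ∨ z = y) :
    ∃ x' ∈ (Iset : Set (GVert n m)), ∃ y' ∈ (Iset : Set (GVert n m)),
      LiesOnShortestPath (G E) x' y' z := by
  refine ⟨x, hx, y, hy, SimpleGraph.Walk.cons hxw (SimpleGraph.Walk.cons hwy .nil), ?_, ?_, ?_⟩
  · apply SimpleGraph.Walk.IsPath.cons
    · apply SimpleGraph.Walk.IsPath.cons (SimpleGraph.Walk.IsPath.nil)
      simp [hwy.ne]
    · simp [hxw.ne, hxy]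
  · rw [dist_Iset hx hy hxy]; simp
  · simp only [SimpleGraph.Walk.support_cons, SimpleGraph.Walk.support_nil, List.mem_cons]
    tauto

/-- In the split graph `G` of the geodetic-set construction, a vertex of `G` is covered by
some pair of vertices of `I = H ∪ {e*}` if and only if it does not belong to `U`. -/
theorem covered_by_Iset_iff
    (E : Fin m → Set (Fin n)) (hn : 1 ≤ n) (hm : 1 ≤ m)
    (hE : ∀ i : Fin n, ∃ j : Fin m, i ∉ E j)
    (z : GVert n m) :
    (∃ x ∈ (Iset : Set (GVert n m)), ∃ y ∈ (Iset : Set (GVert n m)),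
        LiesOnShortestPath (G E) x y z) ↔
      z ∉ Set.range (GVert.u : Fin m → GVert n m) := by
  constructor
  · rintro ⟨x, hx, y, hy, pth, hpath, hlen, hsupp⟩ ⟨j, rfl⟩
    by_cases hxy : x = y
    · subst hxy
      rw [SimpleGraph.dist_self] at hlen
      have hsup := SimpleGraph.Walk.nil_iff_support_eq.mp
        (SimpleGraph.Walk.nil_iff_length_eq.mpr hlen)
      rw [hsup, List.mem_singleton] at hsupp
      rw [← hsupp] at hx
      rcases (mem_Iset_iff _).1 hx with ⟨j', h⟩ | h <;> simp at h
    · rw [dist_Iset hx hy hxy] at hlen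
      rcases mid_of_length_two (G E) pth hlen hsupp with rfl | rfl | ⟨h1, h2⟩
      · rcases (mem_Iset_iff _).1 hx with ⟨j', h⟩ | h <;> simp at h
      · rcases (mem_Iset_iff _).1 hy with ⟨j', h⟩ | h <;> simp at h
      · have hxe : x = GVert.e j := Iset_adj_u hx h1
        have hye : y = GVert.e j := Iset_adj_u hy h2.symm
        exact hxy (hxe.trans hye.symm)
  · intro hzU
    have j0 : Fin m := ⟨0, hm⟩
    cases z with
    | v i =>
      obtain ⟨j, hj⟩ := hE i
      have h1 : (G E).Adj (GVert.e j) (GVert.v i) := by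
        rw [adj_iff]; exact ⟨by simp, Or.inr (by simpa [baseRel] using hj)⟩
      have h2 : (G E).Adj (GVert.v i) GVert.estar := by
        rw [adj_iff]; exact ⟨by simp, Or.inr trivial⟩
      exact covered_of (e_mem_Iset j) estar_mem_Iset (by simp) h1 h2 (Or.inr (Or.inl rfl))
    | e j =>
      have h1 : (G E).Adj (GVert.e j) GVert.ustar := (adj_ustar _ (by simp)).symm
      have h2 : (G E).Adj GVert.ustar GVert.estar := adj_ustar _ (by simp)
      exact covered_of (e_mem_Iset j) estar_mem_Iset (by simp) h1 h2 (Or.inl rfl)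
    | u j => exact absurd ⟨j, rfl⟩ hzU
    | estar =>
      have h1 : (G E).Adj (GVert.e j0) GVert.ustar := (adj_ustar _ (by simp)).symm
      have h2 : (G E).Adj GVert.ustar GVert.estar := adj_ustar _ (by simp)
      exact covered_of (e_mem_Iset j0) estar_mem_Iset (by simp) h1 h2 (Or.inr (Or.inr rfl))
    | ustar =>
      have h1 : (G E).Adj (GVert.e j0) GVert.ustar := (adj_ustar _ (by simp)).symm
      have h2 : (G E).Adj GVert.ustar GVert.estar := adj_ustar _ (by simp)
      exact covered_of (e_mem_Iset j0) estar_mem_Iset (by simp) h1 h2 (Or.inr (Or.inl rfl))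


end GeoConstr
end

section
/- In the co-bipartite graph G of the geodetic extension construction, if S is a minimal geodetic set of G such that A' ⊆ S and S ∩ B' = ∅, then S ∩ V is a minimal transversal of 𝓗 containing A and avoiding B. -/
namespace GeoExt

/-! ## The geodetic extension construction

Given a hypergraph `ℋ` with vertex set `{v_1, …, v_n}` (encoded as `Fin n`) and edge set
`E_1, …, E_m` (encoded as `E : Fin m → Set (Fin n)`), with `n, m ≥ 1` and such that the
full vertex set of `ℋ` is not a minimal transversal, and disjoint sets `A, B` of vertices
of `ℋ`, we build the co-bipartite graph `G` of the reduction from Ext-Trans-Enum to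
Ext-MinGeodetic.  Vertex `v_i` of the paper is `EVert.v ⟨i-1⟩` and `e_j` is
`EVert.e ⟨j-1⟩`. -/

inductive EVert (n m : ℕ) : Type
  | v : Fin n → EVert n m
  | e : Fin m → EVert n m
  | a : EVert n m
  | b : EVert n m
  | c : EVert n m

variable {n m : ℕ}

/-- The base (one-sided) adjacency relation of the construction; the graph is obtained by
symmetrizing it. -/
def baseRel (E : Fin m → Set (Fin n)) : EVert n m → EVert n m → Prop
  | .v _, .v _ => True      -- V is a clique
  | .e _, .e _ => True      -- H is a clique
  | .v i, .e j => i ∈ E j   -- incidence between V and H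
  | .a, .e _ => True        -- a is complete to H
  | .a, .b => True          -- b is adjacent to a
  | .a, .c => True          -- c is adjacent to a
  | .b, .v _ => True        -- b is complete to V
  | .c, .v _ => True        -- c is complete to H ∪ V
  | .c, .e _ => True
  | _, _ => False

/-- The co-bipartite graph `G` of the geodetic extension construction. -/
def G (E : Fin m → Set (Fin n)) : SimpleGraph (EVert n m) :=
  SimpleGraph.fromRel (baseRel E)

/-- `z` lies on some shortest `x`–`y` path in `G`. -/
def LiesOnShortestPath {α : Type*} (G : SimpleGraph α) (x y z : α) : Prop :=
  ∃ pth : G.Walk x y, pth.IsPath ∧ pth.length = G.dist x y ∧ z ∈ pth.support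

/-- `S` is a geodetic set of `G`: every vertex is covered by some pair of vertices of `S`. -/
def IsGeodeticSet {α : Type*} (G : SimpleGraph α) (S : Set α) : Prop :=
  ∀ z : α, ∃ x ∈ S, ∃ y ∈ S, LiesOnShortestPath G x y z

/-- `S` is an inclusion-wise minimal geodetic set of `G`. -/
def IsMinimalGeodeticSet {α : Type*} (G : SimpleGraph α) (S : Set α) : Prop :=
  IsGeodeticSet G S ∧ ∀ S' : Set α, S' ⊂ S → ¬ IsGeodeticSet G S'

/-- `T` is a transversal of the hypergraph with edges `E j`. -/
def IsTransversal (E : Fin m → Set (Fin n)) (T : Set (Fin n)) : Prop :=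
  ∀ j : Fin m, (T ∩ E j).Nonempty

/-- `T` is an inclusion-wise minimal transversal of the hypergraph with edges `E j`. -/
def IsMinimalTransversal (E : Fin m → Set (Fin n)) (T : Set (Fin n)) : Prop :=
  IsTransversal E T ∧ ∀ T' : Set (Fin n), T' ⊂ T → ¬ IsTransversal E T'

/-- The set `A' = A ∪ {a, b, c}`. -/
def Aset (A : Set (Fin n)) : Set (EVert n m) :=
  (EVert.v : Fin n → EVert n m) '' A ∪ {EVert.a, EVert.b, EVert.c}

/-- The set `B' = B ∪ H`. -/
def Bset (B : Set (Fin n)) : Set (EVert n m) :=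
  (EVert.v : Fin n → EVert n m) '' B ∪ Set.range (EVert.e : Fin m → EVert n m)


/-! ### Auxiliary lemmas -/

lemma covers_self {α : Type*} (G : SimpleGraph α) (z : α) : LiesOnShortestPath G z z z :=
  ⟨SimpleGraph.Walk.nil, by simp [SimpleGraph.dist_self]⟩

lemma covers_mid {α : Type*} {G : SimpleGraph α} {x y z : α}
    (hxz : G.Adj x z) (hzy : G.Adj z y) (hxy : ¬ G.Adj x y) (hne : x ≠ y) :
    LiesOnShortestPath G x y z := by
  refine ⟨.cons hxz (.cons hzy .nil), ?_, ?_, by simp⟩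
  · simp [SimpleGraph.Walk.isPath_def, hne, hxz.ne, hzy.ne]
  · have h2 : G.dist x y ≤ 2 := SimpleGraph.dist_le (.cons hxz (.cons hzy .nil))
    have h0 : G.dist x y ≠ 0 := by
      intro h
      rcases SimpleGraph.dist_eq_zero_iff_eq_or_not_reachable.mp h with h' | h'
      · exact hne h'
      · exact h' ⟨.cons hxz (.cons hzy .nil)⟩
    have h1 : G.dist x y ≠ 1 := fun h => hxy (SimpleGraph.dist_eq_one_iff_adj.mp h)
    simp only [SimpleGraph.Walk.length_cons, SimpleGraph.Walk.length_nil]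
    omega

lemma support_cases {α : Type*} {G : SimpleGraph α} {x y z : α} {p : G.Walk x y}
    (hlen : p.length ≤ 2) (hz : z ∈ p.support) :
    z = x ∨ z = y ∨ (G.Adj x z ∧ G.Adj z y ∧ p.length = 2) := by
  cases p with
  | nil => simp at hz; tauto
  | cons h q =>
    cases q with
    | nil => simp at hz; tauto
    | cons h' q' =>
      cases q' with
      | nil =>
        simp at hz
        rcases hz with rfl | rfl | rfl
        · tauto
        · exact Or.inr (Or.inr ⟨h, h', by simp⟩)
        · tauto
      | cons h'' q'' => simp at hlen

lemma hadj {E : Fin m → Set (Fin n)} {p q : EVert n m} (hne : p ≠ q)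
    (h : baseRel E p q ∨ baseRel E q p) : (G E).Adj p q := by
  rw [G, SimpleGraph.fromRel_adj]; exact ⟨hne, h⟩

lemma dist_le_two (E : Fin m → Set (Fin n)) (x y : EVert n m) : (G E).dist x y ≤ 2 := by
  rcases eq_or_ne x y with rfl | hne
  · simp [SimpleGraph.dist_self]
  have one : ∀ {p q : EVert n m}, (G E).Adj p q → (G E).dist p q ≤ 2 := fun h =>
    le_trans (SimpleGraph.dist_le (.cons h .nil)) one_le_two
  have two : ∀ (r : EVert n m) {p q : EVert n m},
      (G E).Adj p r → (G E).Adj r q → (G E).dist p q ≤ 2 := by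
    intro r p q h h'
    exact SimpleGraph.dist_le (.cons h (.cons h' .nil))
  cases x <;> cases y <;>
    first
    | exact absurd rfl hne
    | (refine one (hadj hne ?_); simp [baseRel]; done)
    | (refine two EVert.c (hadj ?_ ?_) (hadj ?_ ?_) <;> (simp [baseRel]; done))
    | (refine two EVert.b (hadj ?_ ?_) (hadj ?_ ?_) <;> (simp [baseRel]; done))
    | (refine two EVert.a (hadj ?_ ?_) (hadj ?_ ?_) <;> (simp [baseRel]; done))

lemma e_covered {E : Fin m → Set (Fin n)} {S : Set (EVert n m)}
    (heS : ∀ j : Fin m, (EVert.e j : EVert n m) ∉ S) {x y : EVert n m}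
    (hx : x ∈ S) (hy : y ∈ S) {j : Fin m}
    (hcov : LiesOnShortestPath (G E) x y (EVert.e j)) :
    ∃ i : Fin n, EVert.v i ∈ S ∧ i ∈ E j := by
  obtain ⟨p, _hp, hlen, hsupp⟩ := hcov
  have hle : p.length ≤ 2 := hlen ▸ dist_le_two E x y
  rcases support_cases hle hsupp with h | h | ⟨h1, h2, plen2⟩
  · exact absurd hx (h ▸ heS j)
  · exact absurd hy (h ▸ heS j)
  have hd2 : (G E).dist x y = 2 := by rw [← hlen, plen2]
  have hnadj : ¬ (G E).Adj x y := by
    intro h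
    have := SimpleGraph.dist_eq_one_iff_adj.mpr h
    omega
  cases x <;> cases y <;>
    [skip; skip; skip; skip; skip; skip; skip; skip; skip; skip; skip; skip; skip; skip;
     skip; skip; skip; skip; skip; skip; skip; skip; skip; skip; skip] <;>
    try simp [G, SimpleGraph.fromRel_adj, baseRel] at h1
  all_goals try simp [G, SimpleGraph.fromRel_adj, baseRel] at h2
  all_goals try simp [G, SimpleGraph.fromRel_adj, baseRel] at hnadj
  all_goals try exact absurd hx (heS _)
  all_goals try exact absurd hy (heS _)
  all_goals try exact ⟨_, hx, h1⟩
  all_goals try exact ⟨_, hy, h2⟩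
  all_goals try (cases hnadj; simp [SimpleGraph.dist_self] at hd2)
  all_goals try simp [SimpleGraph.dist_self] at hd2

lemma geodetic_of_transversal (E : Fin m → Set (Fin n)) {T' : Set (Fin n)}
    (hT' : IsTransversal E T') : IsGeodeticSet (G E) (Aset T') := by
  have ha : (EVert.a : EVert n m) ∈ Aset T' := Or.inr (by simp)
  have hb : (EVert.b : EVert n m) ∈ Aset T' := Or.inr (by simp)
  have hc : (EVert.c : EVert n m) ∈ Aset T' := Or.inr (by simp)
  intro z
  cases z with
  | v i =>
    refine ⟨EVert.b, hb, EVert.c, hc, covers_mid ?_ ?_ ?_ (by simp)⟩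
    · exact hadj (by simp) (by simp [baseRel])
    · exact hadj (by simp) (by simp [baseRel])
    · rw [G, SimpleGraph.fromRel_adj]; simp [baseRel]
  | e j =>
    obtain ⟨i, hiT, hiE⟩ := hT' j
    refine ⟨EVert.a, ha, EVert.v i, Or.inl ⟨i, hiT, rfl⟩, covers_mid ?_ ?_ ?_ (by simp)⟩
    · exact hadj (by simp) (by simp [baseRel])
    · exact hadj (by simp) (Or.inr hiE)
    · rw [G, SimpleGraph.fromRel_adj]; simp [baseRel]
  | a => exact ⟨_, ha, _, ha, covers_self _ _⟩
  | b => exact ⟨_, hb, _, hb, covers_self _ _⟩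
  | c => exact ⟨_, hc, _, hc, covers_self _ _⟩

/-- In the co-bipartite graph `G` of the geodetic extension construction, if `S` is a
minimal geodetic set of `G` with `A' ⊆ S` and `S ∩ B' = ∅`, then `S ∩ V` is a minimal
transversal of `ℋ` containing `A` and avoiding `B`. -/
theorem minimal_geodetic_gives_transversal
    (E : Fin m → Set (Fin n)) (hn : 1 ≤ n) (hm : 1 ≤ m)
    (huniv : ¬ IsMinimalTransversal E (Set.univ : Set (Fin n)))
    (A B : Set (Fin n)) (hAB : A ∩ B = ∅)
    (S : Set (EVert n m)) (hS : IsMinimalGeodeticSet (G E) S)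
    (hA : Aset A ⊆ S) (hB : S ∩ Bset B = ∅) :
    IsMinimalTransversal E ((EVert.v : Fin n → EVert n m) ⁻¹' S) ∧
      A ⊆ (EVert.v : Fin n → EVert n m) ⁻¹' S ∧
      ((EVert.v : Fin n → EVert n m) ⁻¹' S) ∩ B = ∅ := by
  classical
  have hBe : ∀ z ∈ S, z ∉ Bset B := fun z hz hz' =>
    Set.eq_empty_iff_forall_notMem.mp hB z ⟨hz, hz'⟩
  have heS : ∀ j : Fin m, (EVert.e j : EVert n m) ∉ S := fun j hj =>
    hBe _ hj (Or.inr ⟨j, rfl⟩)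
  have haS : (EVert.a : EVert n m) ∈ S := hA (Or.inr (by simp))
  have hbS : (EVert.b : EVert n m) ∈ S := hA (Or.inr (by simp))
  have hcS : (EVert.c : EVert n m) ∈ S := hA (Or.inr (by simp))
  set T : Set (Fin n) := (EVert.v : Fin n → EVert n m) ⁻¹' S with hT
  have htrans : IsTransversal E T := by
    intro j
    obtain ⟨x, hx, y, hy, hcov⟩ := hS.1 (EVert.e j)
    obtain ⟨i, hvS, hiE⟩ := e_covered heS hx hy hcov
    exact ⟨i, hvS, hiE⟩
  refine ⟨⟨htrans, ?_⟩, ?_, ?_⟩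
  · intro T' hsub hT'
    refine hS.2 (Aset T') ?_ (geodetic_of_transversal E hT')
    constructor
    · rintro z (⟨i, hiT', rfl⟩ | hz)
      · exact hsub.1 hiT'
      · rcases hz with rfl | rfl | rfl <;> assumption
    · intro hSsub
      obtain ⟨i, hiT, hiT'⟩ := Set.exists_of_ssubset hsub
      have : (EVert.v i : EVert n m) ∈ Aset T' := hSsub hiT
      rcases this with ⟨i', hi', hvv⟩ | h
      · cases hvv; exact hiT' hi'
      · simp at h
  · exact fun i hi => hA (Or.inl ⟨i, hi, rfl⟩)
  · ext i
    simp only [Set.mem_inter_iff, Set.mem_empty_iff_false, iff_false, not_and]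
    exact fun hi hi' => hBe _ hi (Or.inl ⟨i, hi', rfl⟩)


end GeoExt
end

section
/- In the split graph G of the resolving extension construction with A' := A ∪ U ∪ W and B' := B ∪ U' ∪ U* ∪ H ∪ H', if S is a minimal resolving set of G containing A' and avoiding B', then S ∩ V is a minimal transversal of 𝓗 containing A and avoiding B. -/
namespace ResExt

/-! ## The resolving extension construction

Given a hypergraph `ℋ` with vertex set `{v_1, …, v_n}` (encoded as `Fin n`) and edge set
`E_1, …, E_m` (encoded as `E : Fin m → Set (Fin n)`), where `log (n+1)` and `log (m+1)` are
integers (i.e. `n + 1 = 2^p` and `m + 1 = 2^q`) and `E_m = {v_n}`, we build the split graph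
`G` of the reduction from Ext-Trans-Enum to Ext-MinResolving.  Vertex `v_i` of the paper is
`RVert.v ⟨i-1⟩`, `e_j` is `RVert.e ⟨j-1⟩`, `e'_j` is `RVert.e' ⟨j-1⟩`, `u_k` is
`RVert.u ⟨k-1⟩` (over `Fin p`, `p = log (n+1)`), `u'_k` is `RVert.u' ⟨k-1⟩`, `u*_i` is
`RVert.us ⟨i-1⟩`, and `w_k` is `RVert.w ⟨k-1⟩` (over `Fin q`, `q = log (m+1)`). -/

inductive RVert (n m p q : ℕ) : Type
  | v : Fin n → RVert n m p q
  | e : Fin m → RVert n m p q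
  | e' : Fin m → RVert n m p q
  | u : Fin p → RVert n m p q
  | u' : Fin p → RVert n m p q
  | us : Fin n → RVert n m p q
  | w : Fin q → RVert n m p q

variable {n m p q : ℕ}

/-- The base (one-sided) adjacency relation of the construction; the graph is obtained by
symmetrizing it.  `Nat.testBit (i+1) k = true` encodes `k+1 ∈ I(i+1)`, i.e. the `(k+1)`-th
bit (starting from 1) of the binary representation of the paper-index `i+1` equals 1. -/
def baseRel (E : Fin m → Set (Fin n)) : RVert n m p q → RVert n m p q → Prop
  | .v i, .e j => i ∉ E j                                 -- non-incidence between V and H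
  | .v _, .e' _ => True                                   -- every vertex of H' is adjacent to every vertex of V
  | .v i, .u' k => Nat.testBit (i.val + 1) k.val = true   -- binary coding between V and U'
  | .e j, .w k => Nat.testBit (j.val + 1) k.val = true    -- binary coding between H ∪ H' and W
  | .e' j, .w k => Nat.testBit (j.val + 1) k.val = true
  | .us i, .u k => Nat.testBit (i.val + 1) k.val = true   -- binary coding between U* and U
  | .u k, .u' k' => k = k'                                -- the edges u_ℓ u'_ℓ
  | .u' _, .u' _ => True                                  -- U' ∪ U* ∪ H ∪ H' is a clique
  | .us _, .us _ => True
  | .e _, .e _ => True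
  | .e' _, .e' _ => True
  | .u' _, .us _ => True
  | .u' _, .e _ => True
  | .u' _, .e' _ => True
  | .us _, .e _ => True
  | .us _, .e' _ => True
  | .e _, .e' _ => True
  | _, _ => False

/-- The split graph `G` of the resolving extension construction. -/
def G (E : Fin m → Set (Fin n)) : SimpleGraph (RVert n m p q) :=
  SimpleGraph.fromRel (baseRel E)

/-- `S` is a resolving set of `G`. -/
def IsResolvingSet {α : Type*} (G : SimpleGraph α) (S : Set α) : Prop :=
  ∀ a b : α, a ≠ b → ∃ z ∈ S, G.dist a z ≠ G.dist b z

/-- `S` is an inclusion-wise minimal resolving set of `G`. -/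
def IsMinimalResolvingSet {α : Type*} (G : SimpleGraph α) (S : Set α) : Prop :=
  IsResolvingSet G S ∧ ∀ S' : Set α, S' ⊂ S → ¬ IsResolvingSet G S'

/-- `T` is a transversal of the hypergraph with edges `E j`. -/
def IsTransversal (E : Fin m → Set (Fin n)) (T : Set (Fin n)) : Prop :=
  ∀ j : Fin m, (T ∩ E j).Nonempty

/-- `T` is an inclusion-wise minimal transversal of the hypergraph with edges `E j`. -/
def IsMinimalTransversal (E : Fin m → Set (Fin n)) (T : Set (Fin n)) : Prop :=
  IsTransversal E T ∧ ∀ T' : Set (Fin n), T' ⊂ T → ¬ IsTransversal E T'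

/-- The set `A' = A ∪ U ∪ W`. -/
def Aset (A : Set (Fin n)) : Set (RVert n m p q) :=
  (RVert.v : Fin n → RVert n m p q) '' A ∪
    Set.range (RVert.u : Fin p → RVert n m p q) ∪
    Set.range (RVert.w : Fin q → RVert n m p q)

/-- The set `B' = B ∪ U' ∪ U* ∪ H ∪ H'`. -/
def Bset (B : Set (Fin n)) : Set (RVert n m p q) :=
  (RVert.v : Fin n → RVert n m p q) '' B ∪
    Set.range (RVert.u' : Fin p → RVert n m p q) ∪
    Set.range (RVert.us : Fin n → RVert n m p q) ∪
    Set.range (RVert.e : Fin m → RVert n m p q) ∪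
    Set.range (RVert.e' : Fin m → RVert n m p q)


open SimpleGraph

/-! ### generic distance helpers -/

lemma two_le_dist {V : Type*} {G : SimpleGraph V} {a b : V} (hr : G.Reachable a b)
    (hne : a ≠ b) (hna : ¬ G.Adj a b) : 2 ≤ G.dist a b := by
  have h0 : G.dist a b ≠ 0 := fun h => hne (hr.dist_eq_zero_iff.mp h)
  have h1 : G.dist a b ≠ 1 := fun h => hna (SimpleGraph.dist_eq_one_iff_adj.mp h)
  omega

lemma three_le_dist {V : Type*} {G : SimpleGraph V} {a b : V} (hr : G.Reachable a b)
    (hne : a ≠ b) (hna : ¬ G.Adj a b) (hcn : ∀ z, ¬ (G.Adj a z ∧ G.Adj z b)) :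
    3 ≤ G.dist a b := by
  have h2 : G.dist a b ≠ 2 := by
    intro h
    obtain ⟨w, hw⟩ := hr.exists_walk_length_eq_dist
    rw [h] at hw
    cases w with
    | nil => simp at hw
    | cons h' w' => cases w' with
      | nil => simp at hw
      | cons h'' w'' => cases w'' with
        | nil => exact hcn _ ⟨h', h''⟩
        | cons h3 w3 => simp [SimpleGraph.Walk.length_cons] at hw
  have := two_le_dist hr hne hna
  omega

lemma dist_le_two {V : Type*} {G : SimpleGraph V} {a b : V} (z : V)
    (h1 : G.Adj a z) (h2 : G.Adj z b) : G.dist a b ≤ 2 := by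
  have := SimpleGraph.dist_le (Walk.cons h1 (Walk.cons h2 Walk.nil))
  simpa using this

lemma dist_le_three {V : Type*} {G : SimpleGraph V} {a b : V} (z z' : V)
    (h1 : G.Adj a z) (h2 : G.Adj z z') (h3 : G.Adj z' b) : G.dist a b ≤ 3 := by
  have := SimpleGraph.dist_le (Walk.cons h1 (Walk.cons h2 (Walk.cons h3 Walk.nil)))
  simpa using this

/-! ### bit facts -/

lemma exists_testBit_ne {x y s : ℕ} (hne : x ≠ y) (hx : x < 2 ^ s) (hy : y < 2 ^ s) :
    ∃ k, k < s ∧ Nat.testBit x k ≠ Nat.testBit y k := by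
  by_contra h
  push_neg at h
  apply hne
  apply Nat.eq_of_testBit_eq
  intro k
  by_cases hk : k < s
  · exact h k hk
  · have hxk : Nat.testBit x k = false :=
      Nat.testBit_eq_false_of_lt (lt_of_lt_of_le hx (Nat.pow_le_pow_right (by norm_num) (le_of_not_gt hk)))
    have hyk : Nat.testBit y k = false :=
      Nat.testBit_eq_false_of_lt (lt_of_lt_of_le hy (Nat.pow_le_pow_right (by norm_num) (le_of_not_gt hk)))
    rw [hxk, hyk]

lemma exists_testBit {x s : ℕ} (hx0 : 0 < x) (hx : x < 2 ^ s) :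
    ∃ k, k < s ∧ Nat.testBit x k = true := by
  obtain ⟨k, hk, hne⟩ := exists_testBit_ne (x := x) (y := 0) (by omega) hx (Nat.two_pow_pos s)
  exact ⟨k, hk, by simpa using hne⟩

section Dist

variable {n m p q : ℕ} (E : Fin m → Set (Fin n))

lemma adj_iff (a b : RVert n m p q) :
    (G E).Adj a b ↔ a ≠ b ∧ (baseRel E a b ∨ baseRel E b a) :=
  SimpleGraph.fromRel_adj _ _ _

/-- index of an H-vertex whose (paper) index is `2^k`. -/
lemma pow_lt (hm : m + 1 = 2 ^ q) (k : Fin q) : 2 ^ (k : ℕ) - 1 < m := by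
  have : 2 ^ (k : ℕ) < 2 ^ q := Nat.pow_lt_pow_right (by norm_num) k.isLt
  have h1 : 1 ≤ 2 ^ (k : ℕ) := Nat.one_le_two_pow
  omega

lemma testBit_pow (k : ℕ) : Nat.testBit (2 ^ k - 1 + 1) k = true := by
  have h1 : 1 ≤ 2 ^ k := Nat.one_le_two_pow
  have : (2 ^ k - 1) + 1 = 2 ^ k := by omega
  simp only [this]
  exact Nat.testBit_two_pow_self

/-- every vertex is reachable from `e'_0`. -/
lemma reach (hm1 : 1 ≤ m) (hm : m + 1 = 2 ^ q) (a b : RVert n m p q) : (G E).Reachable a b := by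
  suffices h : ∀ x : RVert n m p q, (G E).Reachable x (.e' ⟨0, hm1⟩) by
    exact (h a).trans (h b).symm
  intro x
  cases x with
  | v i => exact SimpleGraph.Adj.reachable (by simp [adj_iff, baseRel])
  | e j => exact SimpleGraph.Adj.reachable (by simp [adj_iff, baseRel])
  | e' j =>
    by_cases hj : j = ⟨0, hm1⟩
    · subst hj; rfl
    · exact SimpleGraph.Adj.reachable (by simp [adj_iff, baseRel, hj])
  | u k =>
    refine SimpleGraph.Reachable.trans (SimpleGraph.Adj.reachable (v := RVert.u' k) ?_)
      (SimpleGraph.Adj.reachable ?_) <;> simp [adj_iff, baseRel]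
  | u' k => exact SimpleGraph.Adj.reachable (by simp [adj_iff, baseRel])
  | us i => exact SimpleGraph.Adj.reachable (by simp [adj_iff, baseRel])
  | w k =>
    refine SimpleGraph.Reachable.trans
      (SimpleGraph.Adj.reachable (v := RVert.e ⟨2 ^ (k : ℕ) - 1, pow_lt hm k⟩) ?_)
      (SimpleGraph.Adj.reachable ?_)
    · simp [adj_iff, baseRel, testBit_pow]
    · simp [adj_iff, baseRel]

lemma dist_pos' (hm1 : 1 ≤ m) (hm : m + 1 = 2 ^ q) {a b : RVert n m p q} (hne : a ≠ b) : 0 < (G E).dist a b :=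
  Nat.pos_of_ne_zero (fun h => hne (((reach E hm1 hm a b).dist_eq_zero_iff).mp h))

end Dist

open SimpleGraph

section DistLemmas
variable {n m p q : ℕ} (E : Fin m → Set (Fin n))
  (hn1 : 1 ≤ n) (hm1 : 1 ≤ m) (hn : n + 1 = 2 ^ p) (hm : m + 1 = 2 ^ q)

include hm1 hm

/-- L1 -/
lemma dist_v_e' (i : Fin n) (j : Fin m) : (G E : SimpleGraph (RVert n m p q)).dist (.v i) (.e' j) = 1 :=
  SimpleGraph.dist_eq_one_iff_adj.mpr (by simp [adj_iff, baseRel])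

/-- L2 -/
lemma dist_v_e_mem (i : Fin n) (j : Fin m) (hij : i ∈ E j) :
    (G E : SimpleGraph (RVert n m p q)).dist (.v i) (.e j) = 2 := by
  refine le_antisymm (dist_le_two (RVert.e' j) ?_ ?_) (two_le_dist (reach E hm1 hm _ _) ?_ ?_)
  · simp [adj_iff, baseRel]
  · simp [adj_iff, baseRel]
  · simp
  · simp [adj_iff, baseRel, hij]

/-- L2' -/
lemma dist_v_e_notMem (i : Fin n) (j : Fin m) (hij : i ∉ E j) :
    (G E : SimpleGraph (RVert n m p q)).dist (.v i) (.e j) = 1 :=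
  SimpleGraph.dist_eq_one_iff_adj.mpr (by simp [adj_iff, baseRel, hij])

/-- L3 -/
lemma dist_u_e (k : Fin p) (j : Fin m) : (G E : SimpleGraph (RVert n m p q)).dist (.u k) (.e j) = 2 := by
  refine le_antisymm (dist_le_two (RVert.u' k) ?_ ?_) (two_le_dist (reach E hm1 hm _ _) ?_ ?_) <;>
    simp [adj_iff, baseRel]

lemma dist_u_e' (k : Fin p) (j : Fin m) : (G E : SimpleGraph (RVert n m p q)).dist (.u k) (.e' j) = 2 := by
  refine le_antisymm (dist_le_two (RVert.u' k) ?_ ?_) (two_le_dist (reach E hm1 hm _ _) ?_ ?_) <;>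
    simp [adj_iff, baseRel]

/-- L4 -/
lemma dist_u'_e (k : Fin p) (j : Fin m) : (G E : SimpleGraph (RVert n m p q)).dist (.u' k) (.e j) = 1 :=
  SimpleGraph.dist_eq_one_iff_adj.mpr (by simp [adj_iff, baseRel])
lemma dist_u'_e' (k : Fin p) (j : Fin m) : (G E : SimpleGraph (RVert n m p q)).dist (.u' k) (.e' j) = 1 :=
  SimpleGraph.dist_eq_one_iff_adj.mpr (by simp [adj_iff, baseRel])
lemma dist_us_e (i : Fin n) (j : Fin m) : (G E : SimpleGraph (RVert n m p q)).dist (.us i) (.e j) = 1 :=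
  SimpleGraph.dist_eq_one_iff_adj.mpr (by simp [adj_iff, baseRel])
lemma dist_us_e' (i : Fin n) (j : Fin m) : (G E : SimpleGraph (RVert n m p q)).dist (.us i) (.e' j) = 1 :=
  SimpleGraph.dist_eq_one_iff_adj.mpr (by simp [adj_iff, baseRel])
lemma dist_e_e' (j j' : Fin m) : (G E : SimpleGraph (RVert n m p q)).dist (.e j) (.e' j') = 1 :=
  SimpleGraph.dist_eq_one_iff_adj.mpr (by simp [adj_iff, baseRel])

/-- L5 -/
lemma dist_w_e_bit (k : Fin q) (j : Fin m) (h : Nat.testBit (j.val + 1) k.val = true) :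
    (G E : SimpleGraph (RVert n m p q)).dist (.w k) (.e j) = 1 :=
  SimpleGraph.dist_eq_one_iff_adj.mpr (by simp [adj_iff, baseRel, h])

lemma dist_w_e'_bit (k : Fin q) (j : Fin m) (h : Nat.testBit (j.val + 1) k.val = true) :
    (G E : SimpleGraph (RVert n m p q)).dist (.w k) (.e' j) = 1 :=
  SimpleGraph.dist_eq_one_iff_adj.mpr (by simp [adj_iff, baseRel, h])

lemma dist_w_e_nbit (k : Fin q) (j : Fin m) (h : Nat.testBit (j.val + 1) k.val = false) :
    (G E : SimpleGraph (RVert n m p q)).dist (.w k) (.e j) = 2 := by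
  have hne : (⟨2 ^ (k : ℕ) - 1, pow_lt hm k⟩ : Fin m) ≠ j := by
    intro hEq
    have hv : (j : ℕ) = 2 ^ (k : ℕ) - 1 := by rw [← hEq]
    rw [hv, testBit_pow] at h
    simp at h
  refine le_antisymm (dist_le_two (RVert.e ⟨2 ^ (k : ℕ) - 1, pow_lt hm k⟩) ?_ ?_)
    (two_le_dist (reach E hm1 hm _ _) ?_ ?_)
  · simp [adj_iff, baseRel, testBit_pow]
  · simp [adj_iff, baseRel, hne]
  · simp
  · simp [adj_iff, baseRel, h]

lemma dist_w_e'_nbit (k : Fin q) (j : Fin m) (h : Nat.testBit (j.val + 1) k.val = false) :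
    (G E : SimpleGraph (RVert n m p q)).dist (.w k) (.e' j) = 2 := by
  refine le_antisymm (dist_le_two (RVert.e ⟨2 ^ (k : ℕ) - 1, pow_lt hm k⟩) ?_ ?_)
    (two_le_dist (reach E hm1 hm _ _) ?_ ?_)
  · simp [adj_iff, baseRel, testBit_pow]
  · simp [adj_iff, baseRel]
  · simp
  · simp [adj_iff, baseRel, h]

/-- L6 -/
lemma dist_u_v_bit (k : Fin p) (i : Fin n) (h : Nat.testBit (i.val + 1) k.val = true) :
    (G E : SimpleGraph (RVert n m p q)).dist (.u k) (.v i) = 2 := by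
  refine le_antisymm (dist_le_two (RVert.u' k) ?_ ?_) (two_le_dist (reach E hm1 hm _ _) ?_ ?_) <;>
    simp [adj_iff, baseRel, h]

lemma dist_u_v_nbit (k : Fin p) (i : Fin n) (h : Nat.testBit (i.val + 1) k.val = false) :
    (G E : SimpleGraph (RVert n m p q)).dist (.u k) (.v i) = 3 := by
  refine le_antisymm (dist_le_three (RVert.u' k) (RVert.e' ⟨0, hm1⟩) ?_ ?_ ?_)
    (three_le_dist (reach E hm1 hm _ _) ?_ ?_ ?_)
  · simp [adj_iff, baseRel]
  · simp [adj_iff, baseRel]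
  · simp [adj_iff, baseRel]
  · simp
  · simp [adj_iff, baseRel]
  · intro z
    cases z <;> simp [adj_iff, baseRel] <;> rintro rfl <;> simp [h]

/-- L7 -/
lemma dist_u_u'_eq (k : Fin p) : (G E : SimpleGraph (RVert n m p q)).dist (.u k) (.u' k) = 1 :=
  SimpleGraph.dist_eq_one_iff_adj.mpr (by simp [adj_iff, baseRel])

lemma dist_u_u'_ne (k l : Fin p) (hkl : k ≠ l) : (G E : SimpleGraph (RVert n m p q)).dist (.u k) (.u' l) = 2 := by
  refine le_antisymm (dist_le_two (RVert.u' k) ?_ ?_) (two_le_dist (reach E hm1 hm _ _) ?_ ?_) <;>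
    simp [adj_iff, baseRel, hkl]

/-- L8 -/
lemma dist_u_us_bit (k : Fin p) (i : Fin n) (h : Nat.testBit (i.val + 1) k.val = true) :
    (G E : SimpleGraph (RVert n m p q)).dist (.u k) (.us i) = 1 :=
  SimpleGraph.dist_eq_one_iff_adj.mpr (by simp [adj_iff, baseRel, h])

lemma dist_u_us_nbit (k : Fin p) (i : Fin n) (h : Nat.testBit (i.val + 1) k.val = false) :
    (G E : SimpleGraph (RVert n m p q)).dist (.u k) (.us i) = 2 := by
  refine le_antisymm (dist_le_two (RVert.u' k) ?_ ?_) (two_le_dist (reach E hm1 hm _ _) ?_ ?_) <;>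
    simp [adj_iff, baseRel, h]

/-- L9 -/
lemma dist_v_u'_bit (i : Fin n) (l : Fin p) (h : Nat.testBit (i.val + 1) l.val = true) :
    (G E : SimpleGraph (RVert n m p q)).dist (.v i) (.u' l) = 1 :=
  SimpleGraph.dist_eq_one_iff_adj.mpr (by simp [adj_iff, baseRel, h])

lemma dist_v_u'_nbit (i : Fin n) (l : Fin p) (h : Nat.testBit (i.val + 1) l.val = false) :
    (G E : SimpleGraph (RVert n m p q)).dist (.v i) (.u' l) = 2 := by
  refine le_antisymm (dist_le_two (RVert.e' ⟨0, hm1⟩) ?_ ?_)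
    (two_le_dist (reach E hm1 hm _ _) ?_ ?_) <;> simp [adj_iff, baseRel, h]

/-- L10 -/
lemma dist_v_us (i i' : Fin n) : (G E : SimpleGraph (RVert n m p q)).dist (.v i) (.us i') = 2 := by
  refine le_antisymm (dist_le_two (RVert.e' ⟨0, hm1⟩) ?_ ?_)
    (two_le_dist (reach E hm1 hm _ _) ?_ ?_) <;> simp [adj_iff, baseRel]

/-- L11 -/
lemma dist_w_v (k : Fin q) (i : Fin n) : (G E : SimpleGraph (RVert n m p q)).dist (.w k) (.v i) = 2 := by
  refine le_antisymm (dist_le_two (RVert.e' ⟨2 ^ (k : ℕ) - 1, pow_lt hm k⟩) ?_ ?_)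
    (two_le_dist (reach E hm1 hm _ _) ?_ ?_) <;>
    simp [adj_iff, baseRel, testBit_pow]

end DistLemmas
/-- In the split graph `G` of the resolving extension construction, if `S` is a minimal
resolving set of `G` containing `A'` and avoiding `B'`, then `S ∩ V` is a minimal
transversal of `ℋ` containing `A` and avoiding `B`. -/
theorem minimal_resolving_gives_transversal
    (E : Fin m → Set (Fin n)) (hn1 : 1 ≤ n) (hm1 : 1 ≤ m)
    (hn : n + 1 = 2 ^ p) (hm : m + 1 = 2 ^ q)
    (hlast : E ⟨m - 1, by omega⟩ = {(⟨n - 1, by omega⟩ : Fin n)})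
    (A B : Set (Fin n)) (hAB : A ∩ B = ∅)
    (hvn : (⟨n - 1, by omega⟩ : Fin n) ∉ B)
    (S : Set (RVert n m p q)) (hS : IsMinimalResolvingSet (G E) S)
    (hA : Aset A ⊆ S) (hB : S ∩ Bset B = ∅) :
    IsMinimalTransversal E ((RVert.v : Fin n → RVert n m p q) ⁻¹' S) ∧
      A ⊆ (RVert.v : Fin n → RVert n m p q) ⁻¹' S ∧
      ((RVert.v : Fin n → RVert n m p q) ⁻¹' S) ∩ B = ∅ := by
  classical
  obtain ⟨hSres, hSmin⟩ := hS
  have hnotB : ∀ z ∈ S, z ∉ Bset B := fun z hz hzB =>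
    (Set.eq_empty_iff_forall_notMem.mp hB z ⟨hz, hzB⟩)
  have hU : ∀ k : Fin p, RVert.u k ∈ S := fun k =>
    hA (Set.mem_union_left _ (Set.mem_union_right _ ⟨k, rfl⟩))
  have hW : ∀ k : Fin q, RVert.w k ∈ S := fun k =>
    hA (Set.mem_union_right _ ⟨k, rfl⟩)
  -- bit existence facts
  have bitsneN : ∀ i i' : Fin n, i ≠ i' →
      ∃ k : Fin p, Nat.testBit (i.val + 1) k.val ≠ Nat.testBit (i'.val + 1) k.val := by
    intro i i' hne
    obtain ⟨k, hk, hkb⟩ := exists_testBit_ne (s := p) (x := i.val + 1) (y := i'.val + 1)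
      (fun h => hne (Fin.ext (by omega)))
      (by have := i.isLt; omega) (by have := i'.isLt; omega)
    exact ⟨⟨k, hk⟩, hkb⟩
  have bitsneM : ∀ j j' : Fin m, j ≠ j' →
      ∃ k : Fin q, Nat.testBit (j.val + 1) k.val ≠ Nat.testBit (j'.val + 1) k.val := by
    intro j j' hne
    obtain ⟨k, hk, hkb⟩ := exists_testBit_ne (s := q) (x := j.val + 1) (y := j'.val + 1)
      (fun h => hne (Fin.ext (by omega)))
      (by have := j.isLt; omega) (by have := j'.isLt; omega)
    exact ⟨⟨k, hk⟩, hkb⟩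
  have bitexN : ∀ i : Fin n, ∃ k : Fin p, Nat.testBit (i.val + 1) k.val = true := by
    intro i
    obtain ⟨k, hk, hkb⟩ := exists_testBit (s := p) (x := i.val + 1) (by omega) (by have := i.isLt; omega)
    exact ⟨⟨k, hk⟩, hkb⟩
  have bitexM : ∀ j : Fin m, ∃ k : Fin q, Nat.testBit (j.val + 1) k.val = true := by
    intro j
    obtain ⟨k, hk, hkb⟩ := exists_testBit (s := q) (x := j.val + 1) (by omega) (by have := j.isLt; omega)
    exact ⟨⟨k, hk⟩, hkb⟩
  set T : Set (Fin n) := (RVert.v : Fin n → RVert n m p q) ⁻¹' S with hTdef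
  -- Part 1 : T is a transversal
  have htrans : IsTransversal E T := by
    intro j
    obtain ⟨z, hzS, hzd⟩ := hSres (RVert.e j) (RVert.e' j) (by simp)
    cases z with
    | v i =>
      by_cases hij : i ∈ E j
      · exact ⟨i, hzS, hij⟩
      · exfalso
        apply hzd
        rw [SimpleGraph.dist_comm, SimpleGraph.dist_comm (u := RVert.e' j),
          dist_v_e_notMem E hm1 hm i j hij, dist_v_e' E hm1 hm i j]
    | e j' => exact absurd (by simp [Bset]) (hnotB _ hzS)
    | e' j' => exact absurd (by simp [Bset]) (hnotB _ hzS)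
    | u' k => exact absurd (by simp [Bset]) (hnotB _ hzS)
    | us i => exact absurd (by simp [Bset]) (hnotB _ hzS)
    | u k =>
      exfalso
      apply hzd
      rw [SimpleGraph.dist_comm, SimpleGraph.dist_comm (u := RVert.e' j),
        dist_u_e E hm1 hm k j, dist_u_e' E hm1 hm k j]
    | w k =>
      exfalso
      apply hzd
      rw [SimpleGraph.dist_comm, SimpleGraph.dist_comm (u := RVert.e' j)]
      cases hb : Nat.testBit (j.val + 1) k.val with
      | true => rw [dist_w_e_bit E hm1 hm k j hb, dist_w_e'_bit E hm1 hm k j hb]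
      | false => rw [dist_w_e_nbit E hm1 hm k j hb, dist_w_e'_nbit E hm1 hm k j hb]
  -- Part 2 : minimality
  have hmin : ∀ T' : Set (Fin n), T' ⊂ T → ¬ IsTransversal E T' := by
    intro T' hsub htrans'
    -- t0 = v_n belongs to T'
    set t0 : Fin n := ⟨n - 1, by omega⟩ with ht0def
    have ht0 : t0 ∈ T' := by
      obtain ⟨x, hx1, hx2⟩ := htrans' ⟨m - 1, by omega⟩
      rw [hlast] at hx2
      rw [Set.mem_singleton_iff] at hx2
      rwa [hx2] at hx1
    have ht0bit : ∀ l : Fin p, Nat.testBit (t0.val + 1) l.val = true := by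
      intro l
      have : t0.val + 1 = 2 ^ p - 1 := by
        simp only [ht0def]
        omega
      rw [this, Nat.testBit_two_pow_sub_one]
      simp [l.isLt]
    set S' : Set (RVert n m p q) := S \ (RVert.v '' (T \ T')) with hS'def
    have hU' : ∀ k : Fin p, RVert.u k ∈ S' := by
      intro k
      refine ⟨hU k, ?_⟩
      rintro ⟨t, -, ht⟩
      simp at ht
    have hW' : ∀ k : Fin q, RVert.w k ∈ S' := by
      intro k
      refine ⟨hW k, ?_⟩
      rintro ⟨t, -, ht⟩
      simp at ht
    have hVT' : ∀ t : Fin n, t ∈ T' → RVert.v t ∈ S' := by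
      intro t ht
      refine ⟨hsub.1 ht, ?_⟩
      rintro ⟨t', ht', hteq⟩
      have : t' = t := by simpa using hteq
      rw [this] at ht'
      exact ht'.2 ht
    -- S' is a proper subset of S
    have hS'ss : S' ⊂ S := by
      obtain ⟨t1, ht1T, ht1T'⟩ := Set.exists_of_ssubset hsub
      rw [Set.ssubset_iff_of_subset Set.diff_subset]
      exact ⟨RVert.v t1, ht1T, fun h => h.2 ⟨t1, ⟨ht1T, ht1T'⟩, rfl⟩⟩
    apply hSmin S' hS'ss
    -- self-witness helpers
    have self_u : ∀ (k : Fin p) (b : RVert n m p q), RVert.u k ≠ b →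
        ∃ z ∈ S', (G E).dist (RVert.u k) z ≠ (G E).dist b z := by
      intro k b hne
      refine ⟨RVert.u k, hU' k, ?_⟩
      rw [SimpleGraph.dist_self]
      exact ne_of_lt (dist_pos' E hm1 hm (Ne.symm hne))
    have self_w : ∀ (k : Fin q) (b : RVert n m p q), RVert.w k ≠ b →
        ∃ z ∈ S', (G E).dist (RVert.w k) z ≠ (G E).dist b z := by
      intro k b hne
      refine ⟨RVert.w k, hW' k, ?_⟩
      rw [SimpleGraph.dist_self]
      exact ne_of_lt (dist_pos' E hm1 hm (Ne.symm hne))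
    have self_u2 : ∀ (k : Fin p) (b : RVert n m p q), b ≠ RVert.u k →
        ∃ z ∈ S', (G E).dist b z ≠ (G E).dist (RVert.u k) z := by
      intro k b hne
      obtain ⟨z, h1, h2⟩ := self_u k b (Ne.symm hne)
      exact ⟨z, h1, h2.symm⟩
    have self_w2 : ∀ (k : Fin q) (b : RVert n m p q), b ≠ RVert.w k →
        ∃ z ∈ S', (G E).dist b z ≠ (G E).dist (RVert.w k) z := by
      intro k b hne
      obtain ⟨z, h1, h2⟩ := self_w k b (Ne.symm hne)
      exact ⟨z, h1, h2.symm⟩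
    -- pair-resolving helpers (each stated in one order, used in both)
    have res_v_v : ∀ i i' : Fin n, i ≠ i' →
        ∃ z ∈ S', (G E).dist (RVert.v i) z ≠ (G E).dist (RVert.v i') z := by
      intro i i' hne
      obtain ⟨k, hk⟩ := bitsneN i i' hne
      refine ⟨RVert.u k, hU' k, ?_⟩
      rw [SimpleGraph.dist_comm, SimpleGraph.dist_comm (u := RVert.v i')]
      cases hb : Nat.testBit (i.val + 1) k.val <;>
        cases hb' : Nat.testBit (i'.val + 1) k.val
      · exact absurd (hb.trans hb'.symm) hk
      · rw [dist_u_v_nbit E hm1 hm k i hb, dist_u_v_bit E hm1 hm k i' hb']; omega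
      · rw [dist_u_v_bit E hm1 hm k i hb, dist_u_v_nbit E hm1 hm k i' hb']; omega
      · exact absurd (hb.trans hb'.symm) hk
    have res_v_e : ∀ (i : Fin n) (j : Fin m),
        ∃ z ∈ S', (G E).dist (RVert.v i) z ≠ (G E).dist (RVert.e j) z := by
      intro i j
      obtain ⟨k, hk⟩ := bitexM j
      refine ⟨RVert.w k, hW' k, ?_⟩
      rw [SimpleGraph.dist_comm, SimpleGraph.dist_comm (u := RVert.e j),
        dist_w_v E hm1 hm k i, dist_w_e_bit E hm1 hm k j hk]
      omega
    have res_v_e' : ∀ (i : Fin n) (j : Fin m),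
        ∃ z ∈ S', (G E).dist (RVert.v i) z ≠ (G E).dist (RVert.e' j) z := by
      intro i j
      obtain ⟨k, hk⟩ := bitexM j
      refine ⟨RVert.w k, hW' k, ?_⟩
      rw [SimpleGraph.dist_comm, SimpleGraph.dist_comm (u := RVert.e' j),
        dist_w_v E hm1 hm k i, dist_w_e'_bit E hm1 hm k j hk]
      omega
    have res_v_u' : ∀ (i : Fin n) (l : Fin p),
        ∃ z ∈ S', (G E).dist (RVert.v i) z ≠ (G E).dist (RVert.u' l) z := by
      intro i l
      refine ⟨RVert.u l, hU' l, ?_⟩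
      rw [SimpleGraph.dist_comm, SimpleGraph.dist_comm (u := RVert.u' l),
        dist_u_u'_eq E hm1 hm l]
      cases hb : Nat.testBit (i.val + 1) l.val
      · rw [dist_u_v_nbit E hm1 hm l i hb]; omega
      · rw [dist_u_v_bit E hm1 hm l i hb]; omega
    have res_v_us : ∀ (i i' : Fin n),
        ∃ z ∈ S', (G E).dist (RVert.v i) z ≠ (G E).dist (RVert.us i') z := by
      intro i i'
      obtain ⟨k, hk⟩ := bitexN i'
      refine ⟨RVert.u k, hU' k, ?_⟩
      rw [SimpleGraph.dist_comm, SimpleGraph.dist_comm (u := RVert.us i'),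
        dist_u_us_bit E hm1 hm k i' hk]
      cases hb : Nat.testBit (i.val + 1) k.val
      · rw [dist_u_v_nbit E hm1 hm k i hb]; omega
      · rw [dist_u_v_bit E hm1 hm k i hb]; omega
    have res_e_e : ∀ j j' : Fin m, j ≠ j' →
        ∃ z ∈ S', (G E).dist (RVert.e j) z ≠ (G E).dist (RVert.e j') z := by
      intro j j' hne
      obtain ⟨k, hk⟩ := bitsneM j j' hne
      refine ⟨RVert.w k, hW' k, ?_⟩
      rw [SimpleGraph.dist_comm, SimpleGraph.dist_comm (u := RVert.e j')]
      cases hb : Nat.testBit (j.val + 1) k.val <;>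
        cases hb' : Nat.testBit (j'.val + 1) k.val
      · exact absurd (hb.trans hb'.symm) hk
      · rw [dist_w_e_nbit E hm1 hm k j hb, dist_w_e_bit E hm1 hm k j' hb']; omega
      · rw [dist_w_e_bit E hm1 hm k j hb, dist_w_e_nbit E hm1 hm k j' hb']; omega
      · exact absurd (hb.trans hb'.symm) hk
    have res_e'_e' : ∀ j j' : Fin m, j ≠ j' →
        ∃ z ∈ S', (G E).dist (RVert.e' j) z ≠ (G E).dist (RVert.e' j') z := by
      intro j j' hne
      obtain ⟨k, hk⟩ := bitsneM j j' hne
      refine ⟨RVert.w k, hW' k, ?_⟩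
      rw [SimpleGraph.dist_comm, SimpleGraph.dist_comm (u := RVert.e' j')]
      cases hb : Nat.testBit (j.val + 1) k.val <;>
        cases hb' : Nat.testBit (j'.val + 1) k.val
      · exact absurd (hb.trans hb'.symm) hk
      · rw [dist_w_e'_nbit E hm1 hm k j hb, dist_w_e'_bit E hm1 hm k j' hb']; omega
      · rw [dist_w_e'_bit E hm1 hm k j hb, dist_w_e'_nbit E hm1 hm k j' hb']; omega
      · exact absurd (hb.trans hb'.symm) hk
    have res_e_e' : ∀ j j' : Fin m,
        ∃ z ∈ S', (G E).dist (RVert.e j) z ≠ (G E).dist (RVert.e' j') z := by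
      intro j j'
      by_cases hjj : j = j'
      · subst hjj
        obtain ⟨t, htT', htE⟩ := htrans' j
        refine ⟨RVert.v t, hVT' t htT', ?_⟩
        rw [SimpleGraph.dist_comm, SimpleGraph.dist_comm (u := RVert.e' j),
          dist_v_e_mem E hm1 hm t j htE, dist_v_e' E hm1 hm t j]
        omega
      · obtain ⟨k, hk⟩ := bitsneM j j' hjj
        refine ⟨RVert.w k, hW' k, ?_⟩
        rw [SimpleGraph.dist_comm, SimpleGraph.dist_comm (u := RVert.e' j')]
        cases hb : Nat.testBit (j.val + 1) k.val <;>
          cases hb' : Nat.testBit (j'.val + 1) k.val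
        · exact absurd (hb.trans hb'.symm) hk
        · rw [dist_w_e_nbit E hm1 hm k j hb, dist_w_e'_bit E hm1 hm k j' hb']; omega
        · rw [dist_w_e_bit E hm1 hm k j hb, dist_w_e'_nbit E hm1 hm k j' hb']; omega
        · exact absurd (hb.trans hb'.symm) hk
    have res_e_u' : ∀ (j : Fin m) (l : Fin p),
        ∃ z ∈ S', (G E).dist (RVert.e j) z ≠ (G E).dist (RVert.u' l) z := by
      intro j l
      refine ⟨RVert.u l, hU' l, ?_⟩
      rw [SimpleGraph.dist_comm, SimpleGraph.dist_comm (u := RVert.u' l),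
        dist_u_e E hm1 hm l j, dist_u_u'_eq E hm1 hm l]
      omega
    have res_e'_u' : ∀ (j : Fin m) (l : Fin p),
        ∃ z ∈ S', (G E).dist (RVert.e' j) z ≠ (G E).dist (RVert.u' l) z := by
      intro j l
      refine ⟨RVert.u l, hU' l, ?_⟩
      rw [SimpleGraph.dist_comm, SimpleGraph.dist_comm (u := RVert.u' l),
        dist_u_e' E hm1 hm l j, dist_u_u'_eq E hm1 hm l]
      omega
    have res_e_us : ∀ (j : Fin m) (i : Fin n),
        ∃ z ∈ S', (G E).dist (RVert.e j) z ≠ (G E).dist (RVert.us i) z := by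
      intro j i
      obtain ⟨k, hk⟩ := bitexN i
      refine ⟨RVert.u k, hU' k, ?_⟩
      rw [SimpleGraph.dist_comm, SimpleGraph.dist_comm (u := RVert.us i),
        dist_u_e E hm1 hm k j, dist_u_us_bit E hm1 hm k i hk]
      omega
    have res_e'_us : ∀ (j : Fin m) (i : Fin n),
        ∃ z ∈ S', (G E).dist (RVert.e' j) z ≠ (G E).dist (RVert.us i) z := by
      intro j i
      obtain ⟨k, hk⟩ := bitexN i
      refine ⟨RVert.u k, hU' k, ?_⟩
      rw [SimpleGraph.dist_comm, SimpleGraph.dist_comm (u := RVert.us i),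
        dist_u_e' E hm1 hm k j, dist_u_us_bit E hm1 hm k i hk]
      omega
    have res_u'_u' : ∀ l l' : Fin p, l ≠ l' →
        ∃ z ∈ S', (G E).dist (RVert.u' l) z ≠ (G E).dist (RVert.u' l') z := by
      intro l l' hne
      refine ⟨RVert.u l, hU' l, ?_⟩
      rw [SimpleGraph.dist_comm, SimpleGraph.dist_comm (u := RVert.u' l'),
        dist_u_u'_eq E hm1 hm l, dist_u_u'_ne E hm1 hm l l' hne]
      omega
    have res_u'_us : ∀ (l : Fin p) (i : Fin n),
        ∃ z ∈ S', (G E).dist (RVert.u' l) z ≠ (G E).dist (RVert.us i) z := by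
      intro l i
      refine ⟨RVert.v t0, hVT' t0 ht0, ?_⟩
      rw [SimpleGraph.dist_comm, SimpleGraph.dist_comm (u := RVert.us i),
        dist_v_u'_bit E hm1 hm t0 l (ht0bit l), dist_v_us E hm1 hm t0 i]
      omega
    have res_us_us : ∀ i i' : Fin n, i ≠ i' →
        ∃ z ∈ S', (G E).dist (RVert.us i) z ≠ (G E).dist (RVert.us i') z := by
      intro i i' hne
      obtain ⟨k, hk⟩ := bitsneN i i' hne
      refine ⟨RVert.u k, hU' k, ?_⟩
      rw [SimpleGraph.dist_comm, SimpleGraph.dist_comm (u := RVert.us i')]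
      cases hb : Nat.testBit (i.val + 1) k.val <;>
        cases hb' : Nat.testBit (i'.val + 1) k.val
      · exact absurd (hb.trans hb'.symm) hk
      · rw [dist_u_us_nbit E hm1 hm k i hb, dist_u_us_bit E hm1 hm k i' hb']; omega
      · rw [dist_u_us_bit E hm1 hm k i hb, dist_u_us_nbit E hm1 hm k i' hb']; omega
      · exact absurd (hb.trans hb'.symm) hk
    have flip : ∀ a b : RVert n m p q,
        (∃ z ∈ S', (G E).dist a z ≠ (G E).dist b z) →
        ∃ z ∈ S', (G E).dist b z ≠ (G E).dist a z := by
      rintro a b ⟨z, h1, h2⟩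
      exact ⟨z, h1, h2.symm⟩
    intro a b hab
    cases a with
    | u k => exact self_u k b hab
    | w k => exact self_w k b hab
    | v i =>
      cases b with
      | v i' => exact res_v_v i i' (by simpa using hab)
      | e j => exact res_v_e i j
      | e' j => exact res_v_e' i j
      | u k => exact self_u2 k _ hab
      | u' l => exact res_v_u' i l
      | us i' => exact res_v_us i i'
      | w k => exact self_w2 k _ hab
    | e j =>
      cases b with
      | v i => exact flip _ _ (res_v_e i j)
      | e j' => exact res_e_e j j' (by simpa using hab)
      | e' j' => exact res_e_e' j j'
      | u k => exact self_u2 k _ hab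
      | u' l => exact res_e_u' j l
      | us i => exact res_e_us j i
      | w k => exact self_w2 k _ hab
    | e' j =>
      cases b with
      | v i => exact flip _ _ (res_v_e' i j)
      | e j' => exact flip _ _ (res_e_e' j' j)
      | e' j' => exact res_e'_e' j j' (by simpa using hab)
      | u k => exact self_u2 k _ hab
      | u' l => exact res_e'_u' j l
      | us i => exact res_e'_us j i
      | w k => exact self_w2 k _ hab
    | u' l =>
      cases b with
      | v i => exact flip _ _ (res_v_u' i l)
      | e j => exact flip _ _ (res_e_u' j l)
      | e' j => exact flip _ _ (res_e'_u' j l)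
      | u k => exact self_u2 k _ hab
      | u' l' => exact res_u'_u' l l' (by simpa using hab)
      | us i => exact res_u'_us l i
      | w k => exact self_w2 k _ hab
    | us i =>
      cases b with
      | v i' => exact flip _ _ (res_v_us i' i)
      | e j => exact flip _ _ (res_e_us j i)
      | e' j => exact flip _ _ (res_e'_us j i)
      | u k => exact self_u2 k _ hab
      | u' l => exact flip _ _ (res_u'_us l i)
      | us i' => exact res_us_us i i' (by simpa using hab)
      | w k => exact self_w2 k _ hab
  refine ⟨⟨htrans, hmin⟩, ?_, ?_⟩
  · intro a ha
    exact hA (Set.mem_union_left _ (Set.mem_union_left _ ⟨a, ha, rfl⟩))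
  · rw [Set.eq_empty_iff_forall_notMem]
    rintro t ⟨ht1, ht2⟩
    exact hnotB (RVert.v t) ht1
      (Set.mem_union_left _ (Set.mem_union_left _ (Set.mem_union_left _
        (Set.mem_union_left _ ⟨t, ht2, rfl⟩))))

end ResExt
end
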